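/- arXiv:math-ph/0306068 — 4 statements merged into one kernel-verified Lean document; each statement's English description precedes it below -/
import Mathlib

section
/- Fix B > 0, m ∈ ℤ, and k ∈ ℂ, and set a = ½(|m| + m + 1 − (k − B)/B) and b = |m| + 1. If u : (0,∞) → ℂ is twice differentiable and satisfies Kummer's confluent hypergeometric equation x u''(x) + (b − x) u'(x) − a u(x) = 0 for all x > 0, then the function φ(r) = r^{1/2 + |m|} e^{−Br²/4} u(Br²/2) is twice differentiable on (0,∞) and satisfies the spin-up radial Landau eigenvalue equation −φ''(r) + ( (m/r + B r/2)² − 1/(4r²) + B ) φ(r) = k φ(r) for all r > 0. -/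
/-!
Write `φ = g v` with `g r = r^μ e^{-Br²/4}`, `μ = ½ + |m|`, and `v r = u (Br²/2)`. The logarithmic
derivative of `g` is `h r = μ/r - Br/2`, so `φ'' = g (v'' + 2 h v' + (h' + h²) v)`. Under
`x = Br²/2` Kummer's equation becomes `v'' + 2 h v' = 2aB v` (this uses `2μ = 2b - 1`), while
`|m|² = m²` gives `(m/r + Br/2)² - 1/(4r²) + B = h' + h² + B(|m| + m + 2)`. Since
`2aB = B(|m| + m + 2) - k`, the zeroth-order terms collapse to `k φ`.
-/

open Set Filter Complex

theorem hasDerivAt_deriv_of_isOpen {𝕜 F : Type*} [NontriviallyNormedField 𝕜]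
    [NormedAddCommGroup F] [NormedSpace 𝕜 F] {f f' : 𝕜 → F} {f'' : F} {s : Set 𝕜} {x : 𝕜}
    (hs : IsOpen s) (hx : x ∈ s) (hf : ∀ y ∈ s, HasDerivAt f (f' y) y)
    (hf' : HasDerivAt f' f'' x) : HasDerivAt (deriv f) f'' x :=
  hf'.congr_of_eventuallyEq (eventually_of_mem (hs.mem_nhds hx) fun y hy ↦ (hf y hy).deriv)

section LogDeriv

variable {g h v w : ℝ → ℂ} {c h' v' w' : ℂ} {r : ℝ}

theorem HasDerivAt.mul_of_logDeriv (hg : HasDerivAt g (c * g r) r) (hv : HasDerivAt v v' r) :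
    HasDerivAt (fun s ↦ g s * v s) (g r * (v' + c * v r)) r :=
  (hg.mul hv).congr_deriv (by ring)

-- `h` and `w` come first so that they are fixed by unification before `h r` and `w r` occur.
theorem HasDerivAt.mul_add_mul_of_logDeriv (hh : HasDerivAt h h' r) (hw : HasDerivAt w w' r)
    (hg : HasDerivAt g (h r * g r) r) (hv : HasDerivAt v (w r) r) :
    HasDerivAt (fun s ↦ g s * (w s + h s * v s))
      (g r * (w' + 2 * h r * w r + (h' + h r ^ 2) * v r)) r :=
  (hg.mul_of_logDeriv (hw.add (hh.mul hv))).congr_deriv <| by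
    simp only [Pi.add_apply, Pi.mul_apply]; ring

end LogDeriv

theorem hasDerivAt_rpow_mul_exp (μ B : ℝ) {r : ℝ} (hr : 0 < r) :
    HasDerivAt (fun s : ℝ ↦ ((s ^ μ : ℝ) : ℂ) * cexp (-B * s ^ 2 / 4))
      (((μ / r - B * r / 2 : ℝ) : ℂ) * (((r ^ μ : ℝ) : ℂ) * cexp (-B * r ^ 2 / 4))) r := by
  have hpow := (Real.hasDerivAt_rpow_const (p := μ) (Or.inl hr.ne')).ofReal_comp
  have hexp := (((hasDerivAt_pow 2 (r : ℂ)).const_mul (-(B : ℂ))).div_const 4).cexp.comp_ofReal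
  refine (hpow.mul hexp).congr_deriv ?_
  rw [Real.rpow_sub_one hr.ne']
  push_cast
  field_simp
  ring

theorem hasDerivAt_div_sub_mul (μ B : ℝ) {r : ℝ} (hr : r ≠ 0) :
    HasDerivAt (fun s : ℝ ↦ ((μ / s - B * s / 2 : ℝ) : ℂ)) ((-μ / r ^ 2 - B / 2 : ℝ) : ℂ) r := by
  refine ((((hasDerivAt_inv hr).const_mul μ).sub
    (((hasDerivAt_id r).const_mul B).div_const 2)).ofReal_comp).congr_deriv ?_
  push_cast
  ring

section HalfMulSq

variable {u : ℝ → ℂ} {u' : ℂ} {B r : ℝ}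

theorem HasDerivAt.comp_half_mul_sq (hu : HasDerivAt u u' (B * r ^ 2 / 2)) :
    HasDerivAt (fun s ↦ u (B * s ^ 2 / 2)) (B * r * u') r := by
  have hx : HasDerivAt (fun s : ℝ ↦ B * s ^ 2 / 2) (B * r) r :=
    (((hasDerivAt_pow 2 r).const_mul B).div_const 2).congr_deriv (by ring)
  exact (hu.scomp r hx).congr_deriv (by simp)

theorem HasDerivAt.mul_comp_half_mul_sq (hu : HasDerivAt u u' (B * r ^ 2 / 2)) :
    HasDerivAt (fun s ↦ B * s * u (B * s ^ 2 / 2))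
      (B * u (B * r ^ 2 / 2) + (B * r) ^ 2 * u') r := by
  have hBr : HasDerivAt (fun s : ℝ ↦ (B * s : ℂ)) B r :=
    ((hasDerivAt_id (r : ℂ)).const_mul (B : ℂ)).comp_ofReal.congr_deriv (by simp)
  exact (hBr.mul hu.comp_half_mul_sq).congr_deriv (by ring)

end HalfMulSq

theorem radial_kummer_of_kummer {a b u₀ u₁ u₂ : ℂ} {B r : ℝ} (hr : r ≠ 0)
    (hK : ((B * r ^ 2 / 2 : ℝ) : ℂ) * u₂ + (b - (B * r ^ 2 / 2 : ℝ)) * u₁ - a * u₀ = 0) :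
    B * u₁ + (B * r) ^ 2 * u₂ + 2 * ((b - 1 / 2) / r - B * r / 2) * (B * r * u₁) =
      2 * B * a * u₀ := by
  have hr' : (r : ℂ) ≠ 0 := by exact_mod_cast hr
  push_cast at hK
  field_simp
  linear_combination 2 * B * hK

theorem landau_potential_eq (B : ℝ) (m : ℤ) {r : ℝ} (hr : r ≠ 0) :
    ((m : ℝ) / r + B * r / 2) ^ 2 - 1 / (4 * r ^ 2) + B =
      (-(1 / 2 + |(m : ℝ)|) / r ^ 2 - B / 2) + ((1 / 2 + |(m : ℝ)|) / r - B * r / 2) ^ 2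
        + B * (|(m : ℝ)| + m + 2) := by
  field_simp
  linear_combination (-16) * sq_abs (m : ℝ)

/-- If `u` solves Kummer's confluent hypergeometric equation with parameters
`a = ½(|m| + m + 1 − (k − B)/B)`, `b = |m| + 1`, then
`φ(r) = r^{1/2+|m|} e^{−Br²/4} u(Br²/2)` is twice differentiable on `(0,∞)` and solves
the spin-up radial Landau eigenvalue equation
`−φ'' + ((m/r + Br/2)² − 1/(4r²) + B) φ = k φ`. -/
theorem stmt_4 (B : ℝ) (hB : 0 < B) (m : ℤ) (k : ℂ) (a b : ℂ)
    (ha : a = (1 / 2) * (((|m| : ℤ) : ℂ) + (m : ℂ) + 1 - (k - (B : ℂ)) / (B : ℂ)))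
    (hb : b = ((|m| : ℤ) : ℂ) + 1)
    (u : ℝ → ℂ)
    (hu : ∀ x ∈ Set.Ioi (0 : ℝ), DifferentiableAt ℝ u x ∧ DifferentiableAt ℝ (deriv u) x)
    (hKummer : ∀ x ∈ Set.Ioi (0 : ℝ),
      (x : ℂ) * deriv (deriv u) x + (b - (x : ℂ)) * deriv u x - a * u x = 0)
    (φ : ℝ → ℂ)
    (hφ : ∀ r : ℝ, φ r =
      ((r ^ ((1 : ℝ) / 2 + (|m| : ℝ)) : ℝ) : ℂ) * Complex.exp (-(B : ℂ) * (r : ℂ) ^ 2 / 4) *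
        u (B * r ^ 2 / 2)) :
    (∀ r ∈ Set.Ioi (0 : ℝ), DifferentiableAt ℝ φ r ∧ DifferentiableAt ℝ (deriv φ) r) ∧
    ∀ r ∈ Set.Ioi (0 : ℝ),
      -(deriv (deriv φ) r) +
        (((((m : ℝ) / r + B * r / 2) ^ 2 - 1 / (4 * r ^ 2) + B : ℝ)) : ℂ) * φ r = k * φ r := by
  obtain rfl : φ = _ := funext hφ
  generalize hμ : (1 : ℝ) / 2 + |(m : ℝ)| = μ
  have hx : ∀ r ∈ Ioi (0 : ℝ), B * r ^ 2 / 2 ∈ Ioi (0 : ℝ) := fun r hr ↦ by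
    simp only [mem_Ioi] at hr ⊢; positivity
  have hφ' : ∀ r ∈ Ioi (0 : ℝ), HasDerivAt
      (fun s : ℝ ↦ ((s ^ μ : ℝ) : ℂ) * cexp (-B * s ^ 2 / 4) * u (B * s ^ 2 / 2)) _ r :=
    fun r hr ↦ (hasDerivAt_rpow_mul_exp μ B hr).mul_of_logDeriv
      (hu _ (hx r hr)).1.hasDerivAt.comp_half_mul_sq
  have hφ'' : ∀ r ∈ Ioi (0 : ℝ), HasDerivAt (deriv _) _ r := fun r hr ↦
    hasDerivAt_deriv_of_isOpen isOpen_Ioi hr hφ' <|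
      (hasDerivAt_div_sub_mul μ B hr.ne').mul_add_mul_of_logDeriv
        (hu _ (hx r hr)).2.hasDerivAt.mul_comp_half_mul_sq (hasDerivAt_rpow_mul_exp μ B hr)
        (hu _ (hx r hr)).1.hasDerivAt.comp_half_mul_sq
  refine ⟨fun r hr ↦ ⟨(hφ' r hr).differentiableAt, (hφ'' r hr).differentiableAt⟩, fun r hr ↦ ?_⟩
  have hrad := radial_kummer_of_kummer hr.ne' (hKummer _ (hx r hr))
  rw [(hφ'' r hr).deriv, landau_potential_eq B m hr.ne']
  have habs : ((|m| : ℤ) : ℂ) = ((|(m : ℝ)| : ℝ) : ℂ) := by rw [← Int.cast_abs]; norm_cast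
  have hB' : (B : ℂ) ≠ 0 := by exact_mod_cast hB.ne'
  subst ha hb hμ
  rw [habs] at hrad
  beta_reduce
  generalize ((r ^ (1 / 2 + |(m : ℝ)|) : ℝ) : ℂ) * cexp (-B * r ^ 2 / 4) = G
  push_cast at hrad ⊢
  linear_combination (norm := (field_simp; ring)) (-G) * hrad
end

section
/- Fix B > 0, m' ∈ ℤ, and k ∈ ℂ, and set a = ½(|m'| + m' + 1 − (k + B)/B) and b = |m'| + 1. If u : (0,∞) → ℂ is twice differentiable and satisfies Kummer's confluent hypergeometric equation x u''(x) + (b − x) u'(x) − a u(x) = 0 for all x > 0, then the function φ(r) = r^{1/2 + |m'|} e^{−Br²/4} u(Br²/2) is twice differentiable on (0,∞) and satisfies the spin-down radial Landau eigenvalue equation −φ''(r) + ( (m'/r + B r/2)² − 1/(4r²) − B ) φ(r) = k φ(r) for all r > 0. -/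
/-!
Differentiating `r ^ p * exp (-B r² / 4) * v (B r² / 2)` gives again a combination of functions of
this shape, with `p` shifted by `±1` and `v` replaced by `v'`. Applying this twice, with
`x = B r² / 2` and `p = 1/2 + |m'|`, the expression `-φ'' + ((m'/r + Br/2)² - 1/(4r²) - B - k) φ`
becomes `r ^ (p - 2) * exp (-B r² / 4)` times a combination of `u x, u' x, u'' x`. After `u''` is
eliminated through Kummer's equation, the `u'` terms cancel because `b = |m'| + 1`, and the rest
vanishes by the choice of `a` together with `m'² = |m'|²`.
-/

open Complex Filter Set Topology

noncomputable def radialProfile (B p : ℝ) (v : ℝ → ℂ) (r : ℝ) : ℂ :=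
  ((r ^ p : ℝ) : ℂ) * exp (-(B : ℂ) * (r : ℂ) ^ 2 / 4) * v (B * r ^ 2 / 2)

noncomputable def radialProfileDeriv (B p : ℝ) (v : ℝ → ℂ) (r : ℝ) : ℂ :=
  p * radialProfile B (p - 1) v r - B / 2 * radialProfile B (p + 1) v r
    + B * radialProfile B (p + 1) (deriv v) r

lemma hasDerivAt_radialProfile (B p : ℝ) {v : ℝ → ℂ} {r : ℝ} (hr : 0 < r)
    (hv : DifferentiableAt ℝ v (B * r ^ 2 / 2)) :
    HasDerivAt (radialProfile B p v) (radialProfileDeriv B p v r) r := by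
  have hpow : HasDerivAt (fun s : ℝ => ((s ^ p : ℝ) : ℂ)) ((p * r ^ (p - 1) : ℝ) : ℂ) r :=
    (Real.hasDerivAt_rpow_const (Or.inl hr.ne')).ofReal_comp
  have hgauss : HasDerivAt (fun s : ℝ => exp (-(B : ℂ) * (s : ℂ) ^ 2 / 4))
      (exp (-(B : ℂ) * (r : ℂ) ^ 2 / 4) * ((-B * (2 * r) / 4 : ℝ) : ℂ)) r := by
    convert ((((hasDerivAt_id r).pow 2).const_mul (-B)).div_const 4).ofReal_comp.cexp using 1
    · ext s; simp
    · simp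
  have hx : HasDerivAt (fun s : ℝ => B * s ^ 2 / 2) (B * r) r := by
    refine (((hasDerivAt_pow 2 r).const_mul B).div_const 2).congr_deriv ?_
    push_cast
    ring
  refine ((hpow.mul hgauss).mul (hv.hasDerivAt.scomp r hx)).congr_deriv ?_
  simp only [radialProfileDeriv, radialProfile, Real.rpow_add_one hr.ne', Real.rpow_sub_one hr.ne',
    Complex.real_smul, Pi.mul_apply, Function.comp_apply]
  push_cast
  field_simp
  ring

lemma deriv_radialProfile_eventuallyEq (B p : ℝ) {v : ℝ → ℂ} {r : ℝ} (hr : 0 < r)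
    (hv : ∀ s > 0, DifferentiableAt ℝ v (B * s ^ 2 / 2)) :
    deriv (radialProfile B p v) =ᶠ[𝓝 r] radialProfileDeriv B p v :=
  eventually_of_mem (Ioi_mem_nhds hr) fun s hs => (hasDerivAt_radialProfile B p hs (hv s hs)).deriv

lemma hasDerivAt_radialProfileDeriv (B p : ℝ) {v : ℝ → ℂ} {r : ℝ} (hr : 0 < r)
    (hv : DifferentiableAt ℝ v (B * r ^ 2 / 2))
    (hv' : DifferentiableAt ℝ (deriv v) (B * r ^ 2 / 2)) :
    HasDerivAt (radialProfileDeriv B p v)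
      (p * radialProfileDeriv B (p - 1) v r - B / 2 * radialProfileDeriv B (p + 1) v r
        + B * radialProfileDeriv B (p + 1) (deriv v) r) r :=
  (((hasDerivAt_radialProfile B (p - 1) hr hv).const_mul _).sub
    ((hasDerivAt_radialProfile B (p + 1) hr hv).const_mul _)).add
    ((hasDerivAt_radialProfile B (p + 1) hr hv').const_mul _)

lemma hasDerivAt_deriv_radialProfile {B : ℝ} (hB : 0 < B) (p : ℝ) {v : ℝ → ℂ}
    (hv : ∀ x ∈ Ioi 0, DifferentiableAt ℝ v x ∧ DifferentiableAt ℝ (deriv v) x)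
    {r : ℝ} (hr : 0 < r) :
    HasDerivAt (deriv (radialProfile B p v))
      (p * radialProfileDeriv B (p - 1) v r - B / 2 * radialProfileDeriv B (p + 1) v r
        + B * radialProfileDeriv B (p + 1) (deriv v) r) r := by
  have hx : ∀ s > 0, B * s ^ 2 / 2 ∈ Ioi 0 := fun s hs => by simp only [mem_Ioi]; positivity
  exact (hasDerivAt_radialProfileDeriv B p hr (hv _ (hx r hr)).1 (hv _ (hx r hr)).2)
    |>.congr_of_eventuallyEq
      (deriv_radialProfile_eventuallyEq B p hr fun s hs => (hv _ (hx s hs)).1)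

theorem landau_radialProfile_of_kummer {B : ℝ} (hB : 0 < B) {ν μ : ℝ} (hνμ : ν ^ 2 = μ ^ 2)
    {k a b : ℂ} (ha : a = 1 / 2 * (ν + μ + 1 - (k + B) / B)) (hb : b = ν + 1) {u : ℝ → ℂ}
    (hu : ∀ x ∈ Ioi 0, DifferentiableAt ℝ u x ∧ DifferentiableAt ℝ (deriv u) x)
    (hK : ∀ x ∈ Ioi (0 : ℝ), (x : ℂ) * deriv (deriv u) x + (b - x) * deriv u x - a * u x = 0)
    {r : ℝ} (hr : 0 < r) :
    -deriv (deriv (radialProfile B (1 / 2 + ν) u)) r +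
      (((μ / r + B * r / 2) ^ 2 - 1 / (4 * r ^ 2) - B : ℝ) : ℂ) * radialProfile B (1 / 2 + ν) u r
      = k * radialProfile B (1 / 2 + ν) u r := by
  have hKr := hK (B * r ^ 2 / 2) (by simp only [mem_Ioi]; positivity)
  rw [(hasDerivAt_deriv_radialProfile hB _ hu hr).deriv]
  simp only [radialProfileDeriv, radialProfile]
  have e1 : r ^ (1 / 2 + ν - 1 - 1) = r ^ (1 / 2 + ν) / r ^ 2 := by
    rw [Real.rpow_sub_one hr.ne', Real.rpow_sub_one hr.ne']; ring
  have e2 : r ^ (1 / 2 + ν - 1 + 1) = r ^ (1 / 2 + ν) := by ring_nf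
  have e3 : r ^ (1 / 2 + ν + 1 - 1) = r ^ (1 / 2 + ν) := by ring_nf
  have e4 : r ^ (1 / 2 + ν + 1 + 1) = r ^ (1 / 2 + ν) * r ^ 2 := by
    rw [Real.rpow_add_one hr.ne', Real.rpow_add_one hr.ne']; ring
  rw [e1, e2, e3, e4]
  subst ha hb
  have hr' : (r : ℂ) ≠ 0 := by exact_mod_cast hr.ne'
  have hB' : (B : ℂ) ≠ 0 := by exact_mod_cast hB.ne'
  have hνμ' : (ν : ℂ) ^ 2 = μ ^ 2 := by exact_mod_cast hνμ
  generalize u (B * r ^ 2 / 2) = U, deriv u (B * r ^ 2 / 2) = U',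
    deriv (deriv u) (B * r ^ 2 / 2) = U'', exp (-(B : ℂ) * (r : ℂ) ^ 2 / 4) = E, r ^ (1 / 2 + ν) = R at hKr ⊢
  push_cast at hKr ⊢
  -- `2 B r ^ p = 4 x r ^ (p - 2)`: Kummer's equation enters multiplied by `-4 x`
  linear_combination (norm := skip) (-(2 * B) * R * E) * hKr - (R * E * U / r ^ 2) * hνμ'
  field_simp
  ring

/-- If `u` solves Kummer's confluent hypergeometric equation with parameters
`a = ½(|m'| + m' + 1 − (k + B)/B)`, `b = |m'| + 1`, then
`φ(r) = r^{1/2+|m'|} e^{−Br²/4} u(Br²/2)` is twice differentiable on `(0,∞)` and solves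
the spin-down radial Landau eigenvalue equation
`−φ'' + ((m'/r + Br/2)² − 1/(4r²) − B) φ = k φ`. -/
theorem stmt_5 (B : ℝ) (hB : 0 < B) (m' : ℤ) (k : ℂ) (a b : ℂ)
    (ha : a = (1 / 2) * (((|m'| : ℤ) : ℂ) + (m' : ℂ) + 1 - (k + (B : ℂ)) / (B : ℂ)))
    (hb : b = ((|m'| : ℤ) : ℂ) + 1)
    (u : ℝ → ℂ)
    (hu : ∀ x ∈ Set.Ioi (0 : ℝ), DifferentiableAt ℝ u x ∧ DifferentiableAt ℝ (deriv u) x)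
    (hKummer : ∀ x ∈ Set.Ioi (0 : ℝ),
      (x : ℂ) * deriv (deriv u) x + (b - (x : ℂ)) * deriv u x - a * u x = 0)
    (φ : ℝ → ℂ)
    (hφ : ∀ r : ℝ, φ r =
      ((r ^ ((1 : ℝ) / 2 + (|m'| : ℝ)) : ℝ) : ℂ) * Complex.exp (-(B : ℂ) * (r : ℂ) ^ 2 / 4) *
        u (B * r ^ 2 / 2)) :
    (∀ r ∈ Set.Ioi (0 : ℝ), DifferentiableAt ℝ φ r ∧ DifferentiableAt ℝ (deriv φ) r) ∧
    ∀ r ∈ Set.Ioi (0 : ℝ),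
      -(deriv (deriv φ) r) +
        (((((m' : ℝ) / r + B * r / 2) ^ 2 - 1 / (4 * r ^ 2) - B : ℝ)) : ℂ) * φ r = k * φ r := by
  have habs : ((|m'| : ℤ) : ℂ) = ((|(m' : ℝ)| : ℝ) : ℂ) := by
    rw [← Int.cast_abs, Complex.ofReal_intCast]
  have ha' : a = 1 / 2 * (((|(m' : ℝ)| : ℝ) : ℂ) + ((m' : ℝ) : ℂ) + 1 - (k + B) / B) := by
    rw [ha, habs, Complex.ofReal_intCast]
  have hb' : b = ((|(m' : ℝ)| : ℝ) : ℂ) + 1 := by rw [hb, habs]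
  obtain rfl : φ = radialProfile B (1 / 2 + |(m' : ℝ)|) u := funext hφ
  refine ⟨fun r hr => ⟨?_, (hasDerivAt_deriv_radialProfile hB _ hu hr).differentiableAt⟩,
    fun r hr => landau_radialProfile_of_kummer hB (sq_abs _) ha' hb' hu hKummer hr⟩
  have hx : B * r ^ 2 / 2 ∈ Ioi 0 := by simp only [mem_Ioi] at hr ⊢; positivity
  exact (hasDerivAt_radialProfile B _ hr (hu _ hx).1).differentiableAt
end

section
/- Eigenfunctions of the δ'-cylinder interaction (point-spectrum condition of Theorem 3.2): let q : (0,∞) → ℝ be continuous, E ∈ ℝ, R > 0, α ∈ ℝ, and let F, G : (0,∞) → ℂ be twice continuously differentiable solutions of −y''(r) + q(r) y(r) = E y(r) on (0,∞), with F square-integrable on (0,R) and G square-integrable on (R,∞). Define ψ(r) = G'(R) F(r) for 0 < r < R and ψ(r) = F'(R) G(r) for r > R. Then: (i) ψ is square-integrable on (0,∞); (ii) ψ satisfies −ψ'' + q ψ = E ψ on (0,R) and on (R,∞); (iii) the one-sided limits of ψ' at R agree, ψ'(R⁺) = ψ'(R⁻) = F'(R) G'(R); (iv) ψ satisfies the δ'-boundary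 condition ψ(R⁺) − ψ(R⁻) = α ψ'(R) if and only if F'(R) G(R) − G'(R) F(R) − α F'(R) G'(R) = 0. In particular, if this last equation holds and F'(R) ≠ 0 and G'(R) ≠ 0, then ψ is a nonzero square-integrable eigenfunction of the radial operator with δ'-interaction of strength α on the circle of radius R, with eigenvalue E. -/
open MeasureTheory Filter Set Topology

/-! Each piece of `ψ` is a constant multiple of a solution, so it solves the equation and
inherits the continuity of that solution and its derivative at `R`; the constants `G'(R)` and
`F'(R)` are chosen so that both pieces of `ψ'` tend to `F'(R) G'(R)`. When this common limit is
nonzero, `ψ` cannot vanish on `(0, R)`. -/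

def SolvesEigenvalueEqOn (q : ℝ → ℝ) (E : ℝ) (f : ℝ → ℂ) (U : Set ℝ) : Prop :=
  ∀ r ∈ U, -(deriv (deriv f) r) + (q r : ℂ) * f r = (E : ℂ) * f r

lemma eqOn_deriv_const_mul {𝕜 𝕜' : Type*} [NontriviallyNormedField 𝕜] [NormedField 𝕜']
    [NormedAlgebra 𝕜 𝕜'] {U : Set 𝕜} (hU : IsOpen U) {ψ f : 𝕜 → 𝕜'} {c : 𝕜'}
    (h : EqOn ψ (fun x => c * f x) U) : EqOn (deriv ψ) (fun x => c * deriv f x) U := by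
  intro x hx
  rw [h.deriv hU hx, deriv_const_mul_field]

lemma SolvesEigenvalueEqOn.of_eqOn_const_mul {q : ℝ → ℝ} {E : ℝ} {f ψ : ℝ → ℂ} {U : Set ℝ}
    (hU : IsOpen U) {c : ℂ} (hf : SolvesEigenvalueEqOn q E f U)
    (h : EqOn ψ (fun x => c * f x) U) : SolvesEigenvalueEqOn q E ψ U := by
  intro r hr
  rw [eqOn_deriv_const_mul hU (eqOn_deriv_const_mul hU h) hr, h hr]
  linear_combination c * hf r hr

lemma tendsto_nhdsWithin_of_eqOn_const_mul {X M : Type*} [TopologicalSpace X]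
    [TopologicalSpace M] [Mul M] [ContinuousMul M] {ψ f : X → M} {s : Set X} {a : X} {c : M}
    (hf : ContinuousAt f a) (h : EqOn ψ (fun x => c * f x) s) :
    Tendsto ψ (𝓝[s] a) (𝓝 (c * f a)) :=
  ((continuousAt_const.mul hf).tendsto.mono_left nhdsWithin_le_nhds).congr'
    (eventually_nhdsWithin_of_forall fun _ hx => (h hx).symm)

lemma memLp_piecewise_Iio {E : Type*} [NormedAddCommGroup E] {p : ENNReal} {f g : ℝ → E}
    {a b : ℝ} (hab : a < b) (hf : MemLp f p (volume.restrict (Ioo a b)))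
    (hg : MemLp g p (volume.restrict (Ioi b))) :
    MemLp ((Iio b).piecewise f g) p (volume.restrict (Ioi a)) := by
  refine MemLp.piecewise measurableSet_Iio ?_ ?_
  · rwa [Measure.restrict_restrict measurableSet_Iio, Iio_inter_Ioi]
  · rwa [Measure.restrict_restrict measurableSet_Iio.compl, compl_Iio,
      inter_eq_left.mpr (Ici_subset_Ioi.mpr hab), Measure.restrict_congr_set Ioi_ae_eq_Ici.symm]

lemma not_forall_eq_zero_of_tendsto_deriv {E : Type*} [NormedAddCommGroup E] [NormedSpace ℝ E]
    {ψ : ℝ → E} {a b : ℝ} (hab : a < b) {L : E} (hL : L ≠ 0)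
    (h : Tendsto (deriv ψ) (𝓝[<] b) (𝓝 L)) : ¬ ∀ r ∈ Ioo a b, ψ r = 0 := by
  intro hzero
  have hderiv : EqOn (deriv ψ) (deriv fun _ => 0) (Ioo a b) :=
    EqOn.deriv (g := fun _ => (0 : E)) hzero isOpen_Ioo
  rw [deriv_const'] at hderiv
  exact hL (tendsto_nhds_unique h
    (tendsto_const_nhds.congr' (hderiv.eventuallyEq_of_mem (Ioo_mem_nhdsLT hab)).symm))

theorem stmt_10_general (q : ℝ → ℝ)
    (E : ℝ) (R : ℝ) (hR : 0 < R) (α : ℝ) (F G : ℝ → ℂ)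
    (hF : ContDiffOn ℝ 2 F (Set.Ioi 0)) (hG : ContDiffOn ℝ 2 G (Set.Ioi 0))
    (hFeq : ∀ r ∈ Set.Ioi (0 : ℝ),
      -(deriv (deriv F) r) + (q r : ℂ) * F r = (E : ℂ) * F r)
    (hGeq : ∀ r ∈ Set.Ioi (0 : ℝ),
      -(deriv (deriv G) r) + (q r : ℂ) * G r = (E : ℂ) * G r)
    (hFL2 : MemLp F 2 ((volume : Measure ℝ).restrict (Set.Ioo 0 R)))
    (hGL2 : MemLp G 2 ((volume : Measure ℝ).restrict (Set.Ioi R)))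
    (ψ : ℝ → ℂ)
    (hψ : ∀ r : ℝ, ψ r = if r < R then deriv G R * F r else deriv F R * G r) :
    -- (i) square-integrability on (0,∞)
    MemLp ψ 2 ((volume : Measure ℝ).restrict (Set.Ioi 0)) ∧
    -- (ii) the eigenvalue equation away from R
    (∀ r ∈ Set.Ioo (0 : ℝ) R,
      -(deriv (deriv ψ) r) + (q r : ℂ) * ψ r = (E : ℂ) * ψ r) ∧
    (∀ r ∈ Set.Ioi R,
      -(deriv (deriv ψ) r) + (q r : ℂ) * ψ r = (E : ℂ) * ψ r) ∧
    -- (iii) the one-sided limits of ψ' at R agree and equal F'(R)G'(R)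
    Tendsto (deriv ψ) (nhdsWithin R (Set.Ioi R)) (nhds (deriv F R * deriv G R)) ∧
    Tendsto (deriv ψ) (nhdsWithin R (Set.Iio R)) (nhds (deriv F R * deriv G R)) ∧
    -- one-sided limits of ψ itself at R
    Tendsto ψ (nhdsWithin R (Set.Ioi R)) (nhds (deriv F R * G R)) ∧
    Tendsto ψ (nhdsWithin R (Set.Iio R)) (nhds (deriv G R * F R)) ∧
    -- (iv) the δ'-boundary condition criterion
    ((deriv F R * G R - deriv G R * F R = (α : ℂ) * (deriv F R * deriv G R)) ↔
      (deriv F R * G R - deriv G R * F R - (α : ℂ) * (deriv F R * deriv G R) = 0)) ∧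
    -- in particular: nonvanishing of the eigenfunction
    ((deriv F R * G R - deriv G R * F R - (α : ℂ) * (deriv F R * deriv G R) = 0 →
        deriv F R ≠ 0 → deriv G R ≠ 0 → ¬ ∀ r ∈ Set.Ioi (0 : ℝ), ψ r = 0)) := by
  obtain rfl : ψ = (Iio R).piecewise (fun r => deriv G R * F r) (fun r => deriv F R * G r) :=
    funext hψ
  have hlow := piecewise_eqOn (Iio R) (fun r => deriv G R * F r) (fun r => deriv F R * G r)
  have hhigh := (piecewise_eqOn_compl (Iio R) (fun r => deriv G R * F r)
    (fun r => deriv F R * G r)).mono fun r (hr : R < r) => not_lt.mpr hr.le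
  have hRmem : Ioi (0 : ℝ) ∈ 𝓝 R := Ioi_mem_nhds hR
  have hdF := (hF.continuousOn_deriv_of_isOpen isOpen_Ioi one_le_two).continuousAt hRmem
  have hdG := (hG.continuousOn_deriv_of_isOpen isOpen_Ioi one_le_two).continuousAt hRmem
  have hlimRight :=
    tendsto_nhdsWithin_of_eqOn_const_mul hdG (eqOn_deriv_const_mul isOpen_Ioi hhigh)
  have hlimLeft :=
    tendsto_nhdsWithin_of_eqOn_const_mul hdF (eqOn_deriv_const_mul isOpen_Iio hlow)
  rw [mul_comm (deriv G R)] at hlimLeft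
  refine ⟨memLp_piecewise_Iio hR (hFL2.const_mul _) (hGL2.const_mul _), ?_, ?_,
    hlimRight, hlimLeft,
    tendsto_nhdsWithin_of_eqOn_const_mul (hG.continuousOn.continuousAt hRmem) hhigh,
    tendsto_nhdsWithin_of_eqOn_const_mul (hF.continuousOn.continuousAt hRmem) hlow,
    sub_eq_zero.symm, fun _ hF' hG' hzero => ?_⟩
  · exact SolvesEigenvalueEqOn.of_eqOn_const_mul isOpen_Ioo
      (fun r hr => hFeq r hr.1) (hlow.mono Ioo_subset_Iio_self)
  · exact SolvesEigenvalueEqOn.of_eqOn_const_mul isOpen_Ioi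
      (fun r hr => hGeq r (hR.trans hr)) hhigh
  · exact not_forall_eq_zero_of_tendsto_deriv hR (mul_ne_zero hF' hG') hlimLeft
      fun r hr => hzero r hr.1

/-- Eigenfunctions of the δ'-cylinder interaction: with `F, G` being `C²` solutions of
`−y'' + q y = E y` on `(0,∞)`, `F ∈ L²(0,R)`, `G ∈ L²(R,∞)`, and
`ψ = G'(R) F` on `(0,R)`, `ψ = F'(R) G` on `[R,∞)`, the function `ψ` is
square-integrable on `(0,∞)`, solves the eigenvalue equation off `R`, its derivative
has matching one-sided limits `ψ'(R⁺) = ψ'(R⁻) = F'(R)G'(R)`, and `ψ` satisfies the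
δ'-boundary condition `ψ(R⁺) − ψ(R⁻) = α ψ'(R)` iff
`F'(R)G(R) − G'(R)F(R) − α F'(R)G'(R) = 0`; in that case, if moreover `F'(R) ≠ 0` and
`G'(R) ≠ 0`, then `ψ'(R) ≠ 0`, so `ψ` is a nonzero eigenfunction. -/
theorem stmt_10 (q : ℝ → ℝ) (hq : ContinuousOn q (Set.Ioi 0))
    (E : ℝ) (R : ℝ) (hR : 0 < R) (α : ℝ) (F G : ℝ → ℂ)
    (hF : ContDiffOn ℝ 2 F (Set.Ioi 0)) (hG : ContDiffOn ℝ 2 G (Set.Ioi 0))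
    (hFeq : ∀ r ∈ Set.Ioi (0 : ℝ),
      -(deriv (deriv F) r) + (q r : ℂ) * F r = (E : ℂ) * F r)
    (hGeq : ∀ r ∈ Set.Ioi (0 : ℝ),
      -(deriv (deriv G) r) + (q r : ℂ) * G r = (E : ℂ) * G r)
    (hFL2 : MemLp F 2 ((volume : Measure ℝ).restrict (Set.Ioo 0 R)))
    (hGL2 : MemLp G 2 ((volume : Measure ℝ).restrict (Set.Ioi R)))
    (ψ : ℝ → ℂ)
    (hψ : ∀ r : ℝ, ψ r = if r < R then deriv G R * F r else deriv F R * G r) :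
    -- (i) square-integrability on (0,∞)
    MemLp ψ 2 ((volume : Measure ℝ).restrict (Set.Ioi 0)) ∧
    -- (ii) the eigenvalue equation away from R
    (∀ r ∈ Set.Ioo (0 : ℝ) R,
      -(deriv (deriv ψ) r) + (q r : ℂ) * ψ r = (E : ℂ) * ψ r) ∧
    (∀ r ∈ Set.Ioi R,
      -(deriv (deriv ψ) r) + (q r : ℂ) * ψ r = (E : ℂ) * ψ r) ∧
    -- (iii) the one-sided limits of ψ' at R agree and equal F'(R)G'(R)
    Tendsto (deriv ψ) (nhdsWithin R (Set.Ioi R)) (nhds (deriv F R * deriv G R)) ∧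
    Tendsto (deriv ψ) (nhdsWithin R (Set.Iio R)) (nhds (deriv F R * deriv G R)) ∧
    -- one-sided limits of ψ itself at R
    Tendsto ψ (nhdsWithin R (Set.Ioi R)) (nhds (deriv F R * G R)) ∧
    Tendsto ψ (nhdsWithin R (Set.Iio R)) (nhds (deriv G R * F R)) ∧
    -- (iv) the δ'-boundary condition criterion
    ((deriv F R * G R - deriv G R * F R = (α : ℂ) * (deriv F R * deriv G R)) ↔
      (deriv F R * G R - deriv G R * F R - (α : ℂ) * (deriv F R * deriv G R) = 0)) ∧
    -- in particular: nonvanishing of the eigenfunction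
    ((deriv F R * G R - deriv G R * F R - (α : ℂ) * (deriv F R * deriv G R) = 0 →
        deriv F R ≠ 0 → deriv G R ≠ 0 → ¬ ∀ r ∈ Set.Ioi (0 : ℝ), ψ r = 0)) :=
  stmt_10_general q E R hR α F G hF hG hFeq hGeq hFL2 hGL2 ψ hψ
end

section
/- Krein coefficient for the δ'-cylinder interaction (algebraic content of Theorem 3.1): let R > 0, α ∈ ℝ, k ∈ ℂ, q : (0,∞) → ℝ continuous, and let F, G : (0,∞) → ℂ be twice continuously differentiable solutions of −y'' + q y = k y on (0,∞). Define ψ(r) = G'(R) F(r) for 0 < r < R and ψ(r) = F'(R) G(r) for r > R, and suppose D := G(R) F'(R) − G'(R) F(R) − α F'(R) G'(R) ≠ 0. Let χ₀ : (0,∞) → ℂ be continuously differentiable in a neighborhood of R, let c ∈ ℂ, and set χ = χ₀ + c ψ. Then the one-sided limits of χ' at R agree, and χ satisfies the δ'-boundary condition χ(R⁺) − χ(R⁻) = α χ'(R) if and only if c = α χ₀'(R) / D. In particular, the correction coefficient in Krein's resolvent formula for the δ'-interaction is α divided by G(R) F'(R) − G'(R) F(R) − α F'(R) G'(R) (up to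 the normalization of ψ). -/
/-!
On each side of `R` the function `χ` coincides with a function that is `C¹` across `R`:
`χ₀ + c F'(R) G` on the right and `χ₀ + c G'(R) F` on the left. Its one-sided limits and those
of `χ'` are therefore the values of these two functions and of their derivatives at `R`. The
two derivative values agree because `ψ` was normalized so that both one-sided slopes of `ψ` at `R`
equal `F'(R) G'(R)`, and the jump condition becomes a linear equation in `c` with leading
coefficient `D`.
-/

open Filter Topology

theorem tendsto_nhdsWithin_of_eventuallyEq {X Y : Type*} [TopologicalSpace X] [TopologicalSpace Y]
    {f g : X → Y} {a : X} {s : Set X} (hfg : f =ᶠ[𝓝[s] a] g) (hg : ContinuousAt g a) :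
    Tendsto f (𝓝[s] a) (𝓝 (g a)) :=
  (hg.tendsto.mono_left nhdsWithin_le_nhds).congr' hfg.symm

section Deriv

variable {E : Type*} [NormedAddCommGroup E] [NormedSpace ℝ E] {f g : ℝ → E} {a : ℝ} {s : Set ℝ}

theorem ContDiffAt.continuousAt_deriv {n : WithTop ℕ∞} (hg : ContDiffAt ℝ n g a) (hn : n ≠ 0) :
    ContinuousAt (deriv g) a :=
  (hg.continuousAt_fderiv hn).clm_apply continuousAt_const

theorem Filter.EventuallyEq.deriv_of_isOpen (hs : IsOpen s) (hfg : f =ᶠ[𝓝[s] a] g) :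
    deriv f =ᶠ[𝓝[s] a] deriv g := by
  filter_upwards [eventually_eventually_nhdsWithin.2 hfg, self_mem_nhdsWithin] with y hy hys
  rw [hs.nhdsWithin_eq hys] at hy
  exact Filter.EventuallyEq.deriv_eq hy

theorem tendsto_deriv_nhdsWithin_of_eventuallyEq (hs : IsOpen s) (hfg : f =ᶠ[𝓝[s] a] g)
    (hg : ContDiffAt ℝ 1 g a) : Tendsto (deriv f) (𝓝[s] a) (𝓝 (deriv g a)) :=
  tendsto_nhdsWithin_of_eventuallyEq (hfg.deriv_of_isOpen hs) (hg.continuousAt_deriv one_ne_zero)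

end Deriv

theorem deltaPrime_jump_eq_iff {K : Type*} [Field K] {α x x' c f f' g g' D : K}
    (hD : D = g * f' - g' * f - α * (f' * g')) (hD0 : D ≠ 0) :
    (x + c * (f' * g)) - (x + c * (g' * f)) = α * (x' + c * (f' * g')) ↔ c = α * x' / D := by
  rw [eq_div_iff hD0, hD]
  constructor <;> intro h <;> linear_combination h

theorem deriv_add_const_mul_const_mul {x y : ℝ → ℂ} {a : ℝ} (hx : DifferentiableAt ℝ x a)
    (hy : DifferentiableAt ℝ y a) (b c : ℂ) :
    deriv (fun r => x r + c * (b * y r)) a = deriv x a + c * (b * deriv y a) :=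
  (hx.hasDerivAt.add ((hy.hasDerivAt.const_mul b).const_mul c)).deriv

theorem stmt_12_general (R : ℝ) (hR : 0 < R) (α : ℝ) (F G : ℝ → ℂ)
    (hF : ContDiffOn ℝ 2 F (Set.Ioi 0)) (hG : ContDiffOn ℝ 2 G (Set.Ioi 0))
    (ψ : ℝ → ℂ)
    (hψ : ∀ r : ℝ, ψ r = if r < R then deriv G R * F r else deriv F R * G r)
    (D : ℂ)
    (hD : D = G R * deriv F R - deriv G R * F R - (α : ℂ) * (deriv F R * deriv G R))
    (hD0 : D ≠ 0)
    (χ₀ : ℝ → ℂ) (hχ₀ : ∃ ε > (0 : ℝ), ContDiffOn ℝ 1 χ₀ (Set.Ioo (R - ε) (R + ε)))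
    (c : ℂ) (χ : ℝ → ℂ) (hχ : ∀ r : ℝ, χ r = χ₀ r + c * ψ r) :
    -- the one-sided limits of χ' at R agree, with common value χ₀'(R) + c F'(R)G'(R)
    Tendsto (deriv χ) (nhdsWithin R (Set.Ioi R))
      (nhds (deriv χ₀ R + c * (deriv F R * deriv G R))) ∧
    Tendsto (deriv χ) (nhdsWithin R (Set.Iio R))
      (nhds (deriv χ₀ R + c * (deriv F R * deriv G R))) ∧
    -- one-sided limits of χ at R
    Tendsto χ (nhdsWithin R (Set.Ioi R)) (nhds (χ₀ R + c * (deriv F R * G R))) ∧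
    Tendsto χ (nhdsWithin R (Set.Iio R)) (nhds (χ₀ R + c * (deriv G R * F R))) ∧
    -- the δ'-boundary condition holds iff c = α χ₀'(R) / D
    (((χ₀ R + c * (deriv F R * G R)) - (χ₀ R + c * (deriv G R * F R))
        = (α : ℂ) * (deriv χ₀ R + c * (deriv F R * deriv G R))) ↔
      c = (α : ℂ) * deriv χ₀ R / D) := by
  obtain ⟨ε, hε, hχ₀C⟩ := hχ₀
  have hχ₀R : ContDiffAt ℝ 1 χ₀ R := hχ₀C.contDiffAt (Ioo_mem_nhds (by linarith) (by linarith))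
  have hFR : ContDiffAt ℝ 1 F R := (hF.contDiffAt (Ioi_mem_nhds hR)).of_le one_le_two
  have hGR : ContDiffAt ℝ 1 G R := (hG.contDiffAt (Ioi_mem_nhds hR)).of_le one_le_two
  have hχ_right : χ =ᶠ[𝓝[>] R] fun r => χ₀ r + c * (deriv F R * G r) := by
    filter_upwards [self_mem_nhdsWithin] with r (hr : R < r)
    rw [hχ, hψ, if_neg hr.not_gt]
  have hχ_left : χ =ᶠ[𝓝[<] R] fun r => χ₀ r + c * (deriv G R * F r) := by
    filter_upwards [self_mem_nhdsWithin] with r (hr : r < R)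
    rw [hχ, hψ, if_pos hr]
  have hd_right := deriv_add_const_mul_const_mul (hχ₀R.differentiableAt one_ne_zero)
    (hGR.differentiableAt one_ne_zero) (deriv F R) c
  have hd_left := deriv_add_const_mul_const_mul (hχ₀R.differentiableAt one_ne_zero)
    (hFR.differentiableAt one_ne_zero) (deriv G R) c
  rw [mul_comm (deriv G R)] at hd_left
  refine ⟨hd_right ▸ tendsto_deriv_nhdsWithin_of_eventuallyEq isOpen_Ioi hχ_right ?_,
    hd_left ▸ tendsto_deriv_nhdsWithin_of_eventuallyEq isOpen_Iio hχ_left ?_,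
    tendsto_nhdsWithin_of_eventuallyEq hχ_right ?_, tendsto_nhdsWithin_of_eventuallyEq hχ_left ?_,
    deltaPrime_jump_eq_iff hD hD0⟩
  all_goals fun_prop

/-- Krein coefficient for the δ'-cylinder interaction: with `F, G` being `C²` solutions
of `−y'' + q y = k y` on `(0,∞)`, `ψ = G'(R) F` on `(0,R)` and `ψ = F'(R) G` on
`[R,∞)`, and `D = G(R)F'(R) − G'(R)F(R) − α F'(R)G'(R) ≠ 0`, for any `χ₀` that is `C¹`
near `R` and `χ = χ₀ + c ψ`, the one-sided limits of `χ'` at `R` agree (with common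
value `χ'(R) = χ₀'(R) + c F'(R)G'(R)`), and `χ` satisfies the δ'-boundary condition
`χ(R⁺) − χ(R⁻) = α χ'(R)` iff `c = α χ₀'(R) / D`. -/
theorem stmt_12 (R : ℝ) (hR : 0 < R) (α : ℝ) (k : ℂ)
    (q : ℝ → ℝ) (hq : ContinuousOn q (Set.Ioi 0)) (F G : ℝ → ℂ)
    (hF : ContDiffOn ℝ 2 F (Set.Ioi 0)) (hG : ContDiffOn ℝ 2 G (Set.Ioi 0))
    (hFeq : ∀ r ∈ Set.Ioi (0 : ℝ),
      -(deriv (deriv F) r) + (q r : ℂ) * F r = k * F r)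
    (hGeq : ∀ r ∈ Set.Ioi (0 : ℝ),
      -(deriv (deriv G) r) + (q r : ℂ) * G r = k * G r)
    (ψ : ℝ → ℂ)
    (hψ : ∀ r : ℝ, ψ r = if r < R then deriv G R * F r else deriv F R * G r)
    (D : ℂ)
    (hD : D = G R * deriv F R - deriv G R * F R - (α : ℂ) * (deriv F R * deriv G R))
    (hD0 : D ≠ 0)
    (χ₀ : ℝ → ℂ) (hχ₀ : ∃ ε > (0 : ℝ), ContDiffOn ℝ 1 χ₀ (Set.Ioo (R - ε) (R + ε)))
    (c : ℂ) (χ : ℝ → ℂ) (hχ : ∀ r : ℝ, χ r = χ₀ r + c * ψ r) :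
    -- the one-sided limits of χ' at R agree, with common value χ₀'(R) + c F'(R)G'(R)
    Tendsto (deriv χ) (nhdsWithin R (Set.Ioi R))
      (nhds (deriv χ₀ R + c * (deriv F R * deriv G R))) ∧
    Tendsto (deriv χ) (nhdsWithin R (Set.Iio R))
      (nhds (deriv χ₀ R + c * (deriv F R * deriv G R))) ∧
    -- one-sided limits of χ at R
    Tendsto χ (nhdsWithin R (Set.Ioi R)) (nhds (χ₀ R + c * (deriv F R * G R))) ∧
    Tendsto χ (nhdsWithin R (Set.Iio R)) (nhds (χ₀ R + c * (deriv G R * F R))) ∧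
    -- the δ'-boundary condition holds iff c = α χ₀'(R) / D
    (((χ₀ R + c * (deriv F R * G R)) - (χ₀ R + c * (deriv G R * F R))
        = (α : ℂ) * (deriv χ₀ R + c * (deriv F R * deriv G R))) ↔
      c = (α : ℂ) * deriv χ₀ R / D) :=
  stmt_12_general R hR α F G hF hG ψ hψ D hD hD0 χ₀ hχ₀ c χ hχ
end
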